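/- arXiv:2501.13101 — 2 statements merged into one kernel-verified Lean document; each statement's English description precedes it below -/
import Mathlib

section
/- Let N be a single-qubit quantum channel of the form N(ρ) = U N'(V ρ V†) U† with U,V ∈ U(2) and N' the normal-form map with parameters (D,t), and let D_s be a unitary 2-design on 2×2 unitary matrices. Then for every nonempty A ⊆ {1,…,n} and every Hermitian O_A = Σ_{P∈P_n, supp(P)=A} a_P P: E_{W∼D_s^{⊗n}} ‖N^{†⊗n}(W† O_A W)‖_F² = ((‖D‖₂² + ‖t‖₂²)/3)^{|A|} · ‖O_A‖_F², where ‖D‖₂² = D_X²+D_Y²+D_Z² and ‖t‖₂² = t_X²+t_Y²+t_Z². -/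
open scoped Kronecker
open Matrix
open scoped ComplexOrder

noncomputable section

abbrev QMat := Matrix (Fin 2) (Fin 2) ℂ

abbrev NMat (n : ℕ) := Matrix (Fin n → Fin 2) (Fin n → Fin 2) ℂ

/-- The four single-qubit Pauli matrices `I, X, Y, Z`. -/
def pauli : Fin 4 → QMat :=
  ![1, !![0, 1; 1, 0], !![0, -Complex.I; Complex.I, 0], !![1, 0; 0, -1]]

/-- The non-identity Paulis `X, Y, Z`. -/
def pauliXYZ (i : Fin 3) : QMat := pauli i.succ

/-- The `n`-qubit Pauli string indexed by `s : Fin n → Fin 4`. -/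
def pauliString {n : ℕ} (s : Fin n → Fin 4) : NMat n :=
  Matrix.of fun i j => ∏ k, pauli (s k) (i k) (j k)

/-- Support of a Pauli string. -/
def psupp {n : ℕ} (s : Fin n → Fin 4) : Finset (Fin n) :=
  Finset.univ.filter fun k => s k ≠ 0

/-- The observable with real Pauli coefficients `a`. -/
def obsOf {n : ℕ} (a : (Fin n → Fin 4) → ℝ) : NMat n :=
  ∑ s : Fin n → Fin 4, (a s : ℂ) • pauliString s

/-- Normalized Frobenius norm squared, `‖M‖_F² = Tr[Mᴴ M]/dim`. -/
def frobSq {m : Type*} [Fintype m] (M : Matrix m m ℂ) : ℝ :=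
  (Matrix.trace (Mᴴ * M)).re / (Fintype.card m : ℝ)

def IsUnitary {m : Type*} [Fintype m] [DecidableEq m] (U : Matrix m m ℂ) : Prop :=
  U * Uᴴ = 1 ∧ Uᴴ * U = 1

/-- Hilbert–Schmidt adjoint of a (linear) map on matrices:
`Φ†(A) i j = conj (Tr[Aᴴ Φ(E_{ij})])`. -/
def hsAdj {m : Type*} [Fintype m] [DecidableEq m]
    (Φ : Matrix m m ℂ → Matrix m m ℂ) (A : Matrix m m ℂ) : Matrix m m ℂ :=
  Matrix.of fun i j => (starRingEnd ℂ) (Matrix.trace (Aᴴ * Φ (Matrix.single i j 1)))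

/-- Pauli transfer matrix entry of a single-qubit map. -/
def ptm (Φ : QMat → QMat) (a b : Fin 4) : ℂ :=
  Matrix.trace (pauli a * Φ (pauli b)) / 2

/-- Tensor product `Φ 0 ⊗ Φ 1 ⊗ ⋯ ⊗ Φ (n-1)` of single-qubit (linear) maps,
defined via the Pauli transfer matrices. -/
def tensorMap {n : ℕ} (Φ : Fin n → QMat → QMat) (M : NMat n) : NMat n :=
  ∑ s : Fin n → Fin 4, ∑ t : Fin n → Fin 4,
    ((∏ k, ptm (Φ k) (s k) (t k)) * (Matrix.trace (pauliString t * M) / ((2 : ℂ) ^ n))) •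
      pauliString s

/-- `n`-fold tensor power `Φ^{⊗n}` of a single-qubit (linear) map. -/
def tensorPow (n : ℕ) (Φ : QMat → QMat) : NMat n → NMat n :=
  tensorMap fun _ => Φ

/-- Tensor product of `n` single-qubit matrices. -/
def qprod {n : ℕ} (V : Fin n → QMat) : NMat n :=
  Matrix.of fun i j => ∏ k, V k (i k) (j k)

/-- The single-qubit normal-form map `N'` with parameters `(D, t)`:
`N'(I) = I + Σ t_i σ_i` and `N'(σ_i) = D_i σ_i`. -/
def normalForm (D t : Fin 3 → ℝ) (M : QMat) : QMat :=
  (Matrix.trace M / 2) • (1 + ∑ i, (t i : ℂ) • pauliXYZ i) +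
    ∑ i, ((D i : ℂ) * (Matrix.trace (pauliXYZ i * M) / 2)) • pauliXYZ i

/-- `Υ(D,t) = max_{‖a‖₂=1} Σ_i a_i² D_i² + (Σ_i a_i t_i)²`. -/
def Upsilon (D t : Fin 3 → ℝ) : ℝ :=
  sSup { r : ℝ | ∃ a : Fin 3 → ℝ, (∑ i, a i ^ 2) = 1 ∧
    r = (∑ i, a i ^ 2 * D i ^ 2) + (∑ i, a i * t i) ^ 2 }

/-- Choi matrix of a single-qubit map. -/
def choi (Φ : QMat → QMat) : Matrix (Fin 2 × Fin 2) (Fin 2 × Fin 2) ℂ :=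
  Matrix.of fun p q => Φ (Matrix.single p.1 q.1 1) p.2 q.2

/-- A single-qubit quantum channel: linear, trace preserving, completely positive. -/
structure IsChannel (Φ : QMat → QMat) : Prop where
  linear : IsLinearMap ℂ Φ
  tracePreserving : ∀ M, Matrix.trace (Φ M) = Matrix.trace M
  completelyPositive : (choi Φ).PosSemidef

/-- Unitary 1-design (finitely supported distribution). -/
def IsOneDesign {ι : Type*} [Fintype ι] (w : ι → ℝ) (W : ι → QMat) : Prop :=
  ∀ M : QMat, ∑ i, (w i : ℂ) • (W i * M * (W i)ᴴ) = (Matrix.trace M / 2) • (1 : QMat)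

/-- The swap (flip) operator on two qubits. -/
def swapOp : Matrix (Fin 2 × Fin 2) (Fin 2 × Fin 2) ℂ :=
  Matrix.of fun p q => if p.1 = q.2 ∧ p.2 = q.1 then 1 else 0

/-- Unitary 2-design: the twirl of any `M` matches the Haar value
`c_I • 1 + c_F • F` (closed form of the Haar average on `U(2)`). -/
def IsTwoDesign {ι : Type*} [Fintype ι] (w : ι → ℝ) (W : ι → QMat) : Prop :=
  ∀ M : Matrix (Fin 2 × Fin 2) (Fin 2 × Fin 2) ℂ,
    ∑ i, (w i : ℂ) • ((W i ⊗ₖ W i) * M * (W i ⊗ₖ W i)ᴴ) =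
      ((Matrix.trace M - Matrix.trace (swapOp * M) / 2) / 3) •
          (1 : Matrix (Fin 2 × Fin 2) (Fin 2 × Fin 2) ℂ) +
        ((Matrix.trace (swapOp * M) - Matrix.trace M / 2) / 3) • swapOp

/-- `η`-approximate scrambler (finitely supported distribution over `U(2)`). -/
def IsApproxScrambler {ι : Type*} [Fintype ι] (η : ℝ) (w : ι → ℝ) (U : ι → QMat) : Prop :=
  (∀ a b : Fin 4, a ≠ b →
      ∑ i, (w i : ℂ) • (((U i)ᴴ * pauli a * U i) ⊗ₖ ((U i)ᴴ * pauli b * U i)) = 0) ∧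
    ∀ a b : Fin 3,
      ∑ i, w i * ((Matrix.trace (pauliXYZ a * U i * pauliXYZ b * (U i)ᴴ)).re / 2) ^ 2 ≤
        (1 + 2 * η) / 3

/-- Locally unbiased distribution over linear maps on `n`-qubit matrices. -/
def LocallyUnbiased (n : ℕ) {ι : Type*} [Fintype ι] (w : ι → ℝ)
    (C : ι → NMat n → NMat n) : Prop :=
  ∃ (m : ℕ) (v : Fin n → Fin m → ℝ) (W : Fin n → Fin m → QMat),
    (∀ j k, 0 ≤ v j k) ∧ (∀ j, ∑ k, v j k = 1) ∧ (∀ j k, IsUnitary (W j k)) ∧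
      (∀ j, IsOneDesign (v j) (W j)) ∧
      ∀ A B : NMat n,
        ∑ i, (w i : ℂ) • (C i A ⊗ₖ C i B) =
          ∑ i, ∑ f : Fin n → Fin m,
            ((w i * ∏ j, v j (f j) : ℝ) : ℂ) •
              (C i (qprod (fun j => W j (f j)) * A * (qprod fun j => W j (f j))ᴴ) ⊗ₖ
                C i (qprod (fun j => W j (f j)) * B * (qprod fun j => W j (f j))ᴴ))

/-- Pauli-invariant distribution over linear maps on `n`-qubit matrices. -/
def PauliInvariant (n : ℕ) {ι : Type*} [Fintype ι] (w : ι → ℝ)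
    (C : ι → NMat n → NMat n) : Prop :=
  ∀ A B : NMat n,
    ∑ i, (w i : ℂ) • (C i A ⊗ₖ C i B) =
      ((4 : ℂ) ^ n)⁻¹ • ∑ r : Fin n → Fin 4, ∑ i, (w i : ℂ) •
        (C i (pauliString r * A * pauliString r) ⊗ₖ C i (pauliString r * B * pauliString r))

/-- Fourier coefficient `Φ_γ(C) = Π_j 2^{-n} Tr[P_j C_j(P_{j-1})]` of a Pauli path. -/
def pathCoeff {n L : ℕ} (Cs : Fin L → NMat n → NMat n)
    (γ : Fin (L + 1) → Fin n → Fin 4) : ℂ :=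
  ∏ j : Fin L,
    (Matrix.trace (pauliString (γ j.succ) * Cs j (pauliString (γ j.castSucc))) / ((2 : ℂ) ^ n))

/-- Path weight `|γ| = Σ_{j=1}^L |P_j|`. -/
def pathWeight {n L : ℕ} (γ : Fin (L + 1) → Fin n → Fin 4) : ℕ :=
  ∑ j : Fin L, (psupp (γ j.succ)).card

/-- The (non-physical) map `Ñ_p` with `Ñ_p(I) = (N(I) - pI)/(1-p)` and
`Ñ_p(σ) = N(σ)/(1-p)` for `σ ∈ {X,Y,Z}`. -/
def tildeMap (N : QMat → QMat) (p : ℝ) (M : QMat) : QMat :=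
  (Matrix.trace M / 2) • (((1 : ℂ) - (p : ℂ))⁻¹ • (N 1 - (p : ℂ) • (1 : QMat))) +
    ∑ i : Fin 3, (Matrix.trace (pauliXYZ i * M) / 2) • (((1 : ℂ) - (p : ℂ))⁻¹ • N (pauliXYZ i))

/-- The layers of an `L`-layered noisy circuit: `C_j(ρ) = N^{⊗n}(U_j ρ U_j†)` for `j < L`,
and the last layer is followed by the single-qubit layer `V`. -/
def layerMaps {n L : ℕ} (Nm : QMat → QMat) (U : Fin L → NMat n) (Vt : NMat n)
    (j : Fin L) (ρ : NMat n) : NMat n :=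
  if j.val = L - 1 then Vt * tensorPow n Nm (U j * ρ * (U j)ᴴ) * Vtᴴ
  else tensorPow n Nm (U j * ρ * (U j)ᴴ)

/-- Composition `C_L ∘ ⋯ ∘ C_1` of the layers. -/
def circuitOf {n L : ℕ} (lm : Fin L → NMat n → NMat n) (ρ : NMat n) : NMat n :=
  (List.finRange L).foldl (fun σ j => lm j σ) ρ

/-- Operator (spectral) norm of a matrix, as the `ℓ²→ℓ²` operator norm. -/
def specNorm {m : Type*} [Fintype m] (M : Matrix m m ℂ) : ℝ :=
  Real.sqrt (sSup { r : ℝ | ∃ v : m → ℂ,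
    (∑ x, Complex.normSq (v x)) = 1 ∧ r = ∑ x, Complex.normSq (M.mulVec v x) })

/-- Trace norm `‖M‖₁ = Tr √(Mᴴ M)` (sum of singular values). -/
def traceNorm {m : Type*} [Fintype m] [DecidableEq m] (M : Matrix m m ℂ) : ℝ :=
  (Matrix.trace ((Matrix.posSemidef_conjTranspose_mul_self M).1.eigenvectorUnitary.1 *
    Matrix.diagonal ((fun x : ℝ => (x : ℂ)) ∘ (Real.sqrt ·) ∘ (Matrix.posSemidef_conjTranspose_mul_self M).1.eigenvalues) *
    (star (Matrix.posSemidef_conjTranspose_mul_self M).1.eigenvectorUnitary : Matrix m m ℂ))).re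

/-!
Write `R` for the Pauli transfer matrix (PTM) of `N†` and `S_W` for that of `ρ ↦ W† ρ W`.
In the Pauli basis, `N^{†⊗n}(W† O W)` has coefficients `∑_u a_u ∏_k (R S_{W_k})(s_k, u_k)`, so
its squared Frobenius norm averaged over the product distribution factorises over the qubits
into the single-qubit twirl `E_W S_Wᴴ K S_W` of `K = Rᴴ R`. For a unitary 2-design this twirl is
`diag(K₀₀, c, c, c)` with `c = (tr K - K₀₀)/3`. Since `R` is the conjugate transpose of the PTM
of `N`, trace preservation of `N` gives `K₀₀ = 1`, and `tr K` is the squared Frobenius norm of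
the PTM of `N`. The PTMs of the unitary conjugations by `U` and `V` are unitary, so this equals
the squared Frobenius norm `1 + ‖D‖₂² + ‖t‖₂²` of the PTM of `N'`. Hence every qubit of the
support `A` contributes the factor `(‖D‖₂² + ‖t‖₂²)/3` and every other qubit the factor `1`.
-/

lemma Matrix.sum_prod_mul_prod {σ κ R : Type*} [Fintype σ] [DecidableEq σ] [Fintype κ]
    [CommSemiring R] (A B : σ → Matrix κ κ R) (s u : σ → κ) :
    ∑ t : σ → κ, (∏ k, A k (s k) (t k)) * ∏ k, B k (t k) (u k) =
      ∏ k, (A k * B k) (s k) (u k) := by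
  simp only [Matrix.mul_apply, Fintype.prod_sum, Finset.prod_mul_distrib]

lemma Matrix.prod_diagonal_apply {σ κ R : Type*} [Fintype σ] [DecidableEq κ] [CommSemiring R]
    (d : κ → R) (u u' : σ → κ) :
    ∏ k, Matrix.diagonal d (u k) (u' k) = if u = u' then ∏ k, d (u k) else 0 := by
  split_ifs with h
  · simp [h]
  · obtain ⟨k, hk⟩ := Function.ne_iff.mp h
    exact Finset.prod_eq_zero (Finset.mem_univ k) (by simp [hk])

lemma trace_conjTranspose_mul_self_mul_mul {m : Type*} [Fintype m] [DecidableEq m]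
    {Q R : Matrix m m ℂ} (hQ : Qᴴ * Q = 1) (hR : R * Rᴴ = 1) (P : Matrix m m ℂ) :
    trace ((Q * P * R)ᴴ * (Q * P * R)) = trace (Pᴴ * P) := by
  have hgram : (Q * P * R)ᴴ * (Q * P * R) = Rᴴ * (Pᴴ * P) * R := by
    simp only [Matrix.conjTranspose_mul, Matrix.mul_assoc]
    rw [← Matrix.mul_assoc Qᴴ Q, hQ, Matrix.one_mul]
  rw [hgram, Matrix.trace_mul_cycle, ← Matrix.mul_assoc, hR, Matrix.one_mul]

lemma pauli_conjTranspose (a : Fin 4) : (pauli a)ᴴ = pauli a := by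
  fin_cases a <;> ext i j <;> fin_cases i <;> fin_cases j <;>
    simp [pauli, Matrix.conjTranspose_apply]

lemma trace_pauli (a : Fin 4) : trace (pauli a) = if a = 0 then 2 else 0 := by
  fin_cases a <;> simp [pauli, Matrix.trace_fin_two]

lemma trace_pauli_mul_pauli (a b : Fin 4) :
    trace (pauli a * pauli b) = if a = b then 2 else 0 := by
  fin_cases a <;> fin_cases b <;>
    simp [pauli, Matrix.trace_fin_two, Complex.ext_iff] <;> norm_num

lemma sum_pauli_coeff_smul (M : QMat) : ∑ a, (trace (pauli a * M) / 2) • pauli a = M := by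
  ext i j
  fin_cases i <;> fin_cases j <;>
    simp [Fin.sum_univ_four, pauli, Matrix.trace_fin_two, Matrix.mul_apply] <;>
    ring_nf <;> simp [Complex.I_sq] <;> ring

lemma sum_pauli_coeff_conj_mul (M M' : QMat) :
    ∑ a, starRingEnd ℂ (trace (pauli a * M) / 2) * (trace (pauli a * M') / 2) =
      trace (Mᴴ * M') / 2 := by
  simp [Fin.sum_univ_four, pauli, Matrix.trace_fin_two, Matrix.mul_apply,
    Matrix.conjTranspose_apply, map_ofNat]
  ring_nf
  simp [Complex.I_sq]
  ring

lemma trace_kronecker_mul_swapOp (A B : QMat) : trace ((A ⊗ₖ B) * swapOp) = trace (A * B) := by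
  simp [Matrix.trace, Matrix.mul_apply, Fintype.sum_prod_type, Fin.sum_univ_two, swapOp,
    Matrix.kroneckerMap_apply]

lemma trace_swapOp_mul_kronecker (A B : QMat) : trace (swapOp * (A ⊗ₖ B)) = trace (A * B) := by
  rw [Matrix.trace_mul_comm, trace_kronecker_mul_swapOp]

section Qubits

variable {n : ℕ}

lemma qprod_mul_qprod (A B : Fin n → QMat) : qprod A * qprod B = qprod fun k => A k * B k := by
  ext i j
  simp only [Matrix.mul_apply, qprod, Matrix.of_apply, Fintype.prod_sum, Finset.prod_mul_distrib]

lemma trace_qprod (A : Fin n → QMat) : trace (qprod A) = ∏ k, trace (A k) := by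
  simp only [Matrix.trace, Matrix.diag, qprod, Matrix.of_apply, Fintype.prod_sum]

lemma conjTranspose_qprod (A : Fin n → QMat) : (qprod A)ᴴ = qprod fun k => (A k)ᴴ := by
  ext i j
  simp [qprod, Matrix.conjTranspose_apply]

lemma pauliString_eq_qprod (s : Fin n → Fin 4) : pauliString s = qprod fun k => pauli (s k) :=
  rfl

lemma pauliString_conjTranspose (s : Fin n → Fin 4) : (pauliString s)ᴴ = pauliString s := by
  simp only [pauliString_eq_qprod, conjTranspose_qprod, pauli_conjTranspose]

lemma trace_pauliString_mul_pauliString (s t : Fin n → Fin 4) :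
    trace (pauliString s * pauliString t) = if s = t then 2 ^ n else 0 := by
  simp only [pauliString_eq_qprod, qprod_mul_qprod, trace_qprod, trace_pauli_mul_pauli]
  split_ifs with h
  · simp [h]
  · obtain ⟨k, hk⟩ := Function.ne_iff.mp h
    exact Finset.prod_eq_zero (Finset.mem_univ k) (if_neg hk)

lemma frobSq_sum_smul_pauliString (c : (Fin n → Fin 4) → ℂ) :
    frobSq (∑ s, c s • pauliString s) = ∑ s, ‖c s‖ ^ 2 := by
  have htrace : trace ((∑ s, c s • pauliString s)ᴴ * ∑ s, c s • pauliString s) =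
      2 ^ n * ∑ s, ((‖c s‖ ^ 2 : ℝ) : ℂ) := by
    simp only [Matrix.conjTranspose_sum, Matrix.conjTranspose_smul, pauliString_conjTranspose,
      Matrix.sum_mul, Matrix.smul_mul, Matrix.mul_smul, Matrix.trace_sum, Matrix.trace_smul,
      trace_pauliString_mul_pauliString, smul_eq_mul, mul_ite, mul_zero, Finset.sum_ite_eq',
      Finset.mem_univ, if_true, Finset.mul_sum]
    refine Finset.sum_congr rfl fun s _ => ?_
    rw [Complex.ofReal_pow, ← Complex.conj_mul', Complex.star_def]
    ring
  rw [frobSq, htrace]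
  norm_cast
  simp

end Qubits

def ptmMatrix (Φ : QMat → QMat) : Matrix (Fin 4) (Fin 4) ℂ := Matrix.of (ptm Φ)

def conjMap (U : QMat) (M : QMat) : QMat := U * M * Uᴴ

lemma isLinearMap_conjMap (U : QMat) : IsLinearMap ℂ (conjMap U) :=
  ⟨fun M M' => by simp [conjMap, Matrix.mul_add, Matrix.add_mul],
    fun c M => by simp [conjMap]⟩

lemma isLinearMap_normalForm (D t : Fin 3 → ℝ) : IsLinearMap ℂ (normalForm D t) :=
  ⟨fun M M' => by
    simp only [normalForm, mul_add, Matrix.trace_add, add_div, add_smul, Finset.sum_add_distrib]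
    abel,
   fun c M => by
    simp only [normalForm, Matrix.mul_smul, Matrix.trace_smul, smul_eq_mul, smul_add,
      Finset.smul_sum, smul_smul]
    ring_nf⟩

lemma ptmMatrix_comp {Φ : QMat → QMat} (hΦ : IsLinearMap ℂ Φ) (Ψ : QMat → QMat) :
    ptmMatrix (Φ ∘ Ψ) = ptmMatrix Φ * ptmMatrix Ψ := by
  ext a b
  let L : QMat →ₗ[ℂ] QMat := IsLinearMap.mk' Φ hΦ
  have hexp : Φ (Ψ (pauli b)) = ∑ c, ptm Ψ c b • Φ (pauli c) := by
    conv_lhs => rw [← sum_pauli_coeff_smul (Ψ (pauli b))]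
    exact (map_sum L _ _).trans (Finset.sum_congr rfl fun c _ => L.map_smul _ _)
  simp only [ptmMatrix, Matrix.of_apply, Matrix.mul_apply, ptm, Function.comp_apply, hexp,
    Matrix.mul_sum, Matrix.mul_smul, Matrix.trace_sum, Matrix.trace_smul, smul_eq_mul,
    Finset.sum_div]
  exact Finset.sum_congr rfl fun c _ => by ring

lemma ptmMatrix_conjMap_conjTranspose_mul_self {U : QMat} (hU : IsUnitary U) :
    (ptmMatrix (conjMap U))ᴴ * ptmMatrix (conjMap U) = 1 := by
  ext x y
  have hgram : (conjMap U (pauli x))ᴴ * conjMap U (pauli y) = U * (pauli x * pauli y) * Uᴴ := by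
    simp only [conjMap, Matrix.conjTranspose_mul, Matrix.conjTranspose_conjTranspose,
      pauli_conjTranspose, Matrix.mul_assoc]
    rw [← Matrix.mul_assoc Uᴴ U, hU.2, Matrix.one_mul]
  simp only [Matrix.mul_apply, Matrix.conjTranspose_apply, ptmMatrix, Matrix.of_apply, ptm,
    Complex.star_def, sum_pauli_coeff_conj_mul, hgram]
  rw [Matrix.trace_mul_cycle, ← Matrix.mul_assoc, hU.2, Matrix.one_mul, trace_pauli_mul_pauli,
    Matrix.one_apply]
  split_ifs <;> norm_num

lemma ptmMatrix_normalForm (D t : Fin 3 → ℝ) :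
    ptmMatrix (normalForm D t) =
      !![1, 0, 0, 0; (t 0 : ℂ), (D 0 : ℂ), 0, 0; (t 1 : ℂ), 0, (D 1 : ℂ), 0;
        (t 2 : ℂ), 0, 0, (D 2 : ℂ)] := by
  ext x y
  fin_cases x <;> fin_cases y <;>
    simp [ptmMatrix, ptm, normalForm, pauliXYZ, Matrix.mul_add, Matrix.trace_add, trace_pauli,
      trace_pauli_mul_pauli, Fin.sum_univ_three]

lemma trace_conjTranspose_mul_self_ptmMatrix_normalForm (D t : Fin 3 → ℝ) :
    trace ((ptmMatrix (normalForm D t))ᴴ * ptmMatrix (normalForm D t)) =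
      1 + (((∑ i, D i ^ 2) + ∑ i, t i ^ 2 : ℝ) : ℂ) := by
  rw [ptmMatrix_normalForm]
  simp [Matrix.trace, Matrix.mul_apply, Fin.sum_univ_four, Fin.sum_univ_three,
    Matrix.conjTranspose_apply]
  ring

lemma trace_conjTranspose_mul_self_ptmMatrix_of_normalForm {D t : Fin 3 → ℝ} {U V : QMat}
    (hU : IsUnitary U) (hV : IsUnitary V) {N : QMat → QMat}
    (hNform : ∀ ρ, N ρ = U * normalForm D t (V * ρ * Vᴴ) * Uᴴ) :
    trace ((ptmMatrix N)ᴴ * ptmMatrix N) = 1 + (((∑ i, D i ^ 2) + ∑ i, t i ^ 2 : ℝ) : ℂ) := by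
  have hN : N = conjMap U ∘ normalForm D t ∘ conjMap V := funext hNform
  have hCV : ptmMatrix (conjMap V) * (ptmMatrix (conjMap V))ᴴ = 1 :=
    mul_eq_one_comm.mp (ptmMatrix_conjMap_conjTranspose_mul_self hV)
  rw [hN, ptmMatrix_comp (isLinearMap_conjMap U), ptmMatrix_comp (isLinearMap_normalForm D t),
    ← Matrix.mul_assoc (ptmMatrix (conjMap U)), trace_conjTranspose_mul_self_mul_mul
      (ptmMatrix_conjMap_conjTranspose_mul_self hU) hCV,
    trace_conjTranspose_mul_self_ptmMatrix_normalForm]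

lemma ptmMatrix_hsAdj {N : QMat → QMat} (hN : IsLinearMap ℂ N) :
    ptmMatrix (hsAdj N) = (ptmMatrix N)ᴴ := by
  ext b t
  let L : QMat →ₗ[ℂ] QMat := IsLinearMap.mk' N hN
  have hexp : N (pauli b) = ∑ i, ∑ j, pauli b i j • N (Matrix.single i j 1) := by
    conv_lhs => rw [Matrix.matrix_eq_sum_single (pauli b)]
    change L _ = ∑ i, ∑ j, _ • L _
    simp only [map_sum, ← L.map_smul, Matrix.smul_single, smul_eq_mul, mul_one]
  have hconj : ∀ i j, starRingEnd ℂ (pauli b i j) = pauli b j i := fun i j => by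
    simpa [Matrix.conjTranspose_apply] using congrFun (congrFun (pauli_conjTranspose b) j) i
  simp only [ptmMatrix, ptm, hsAdj, Matrix.of_apply, Matrix.conjTranspose_apply, hexp,
    Complex.star_def, map_div₀, map_ofNat, Matrix.mul_sum, Matrix.mul_smul, Matrix.trace_sum,
    Matrix.trace_smul, smul_eq_mul, map_sum, map_mul, hconj, pauli_conjTranspose]
  simp only [Matrix.trace, Matrix.diag, Matrix.mul_apply, Matrix.of_apply]
  rw [Finset.sum_comm]

lemma ptmMatrix_apply_zero_left {N : QMat → QMat} (htp : ∀ M, trace (N M) = trace M)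
    (b : Fin 4) : ptmMatrix N 0 b = if b = 0 then 1 else 0 := by
  have hI : pauli 0 = 1 := rfl
  simp only [ptmMatrix, ptm, Matrix.of_apply, hI, Matrix.one_mul, htp, trace_pauli]
  split_ifs <;> norm_num

lemma conj_ptmMatrix_mul_ptmMatrix_conjMap (W : QMat) (t x t' y : Fin 4) :
    starRingEnd ℂ (ptmMatrix (conjMap Wᴴ) t x) * ptmMatrix (conjMap Wᴴ) t' y =
      trace ((pauli x ⊗ₖ pauli y) * ((W ⊗ₖ W) * (pauli t ⊗ₖ pauli t') * (W ⊗ₖ W)ᴴ)) / 4 := by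
  have hcycle : ∀ a b : Fin 4, trace (pauli a * (Wᴴ * pauli b * W)) =
      trace (pauli b * (W * pauli a * Wᴴ)) := fun a b => by
    rw [← Matrix.mul_assoc, Matrix.trace_mul_cycle, ← Matrix.mul_assoc, Matrix.trace_mul_comm]
  have hreal : ∀ a b : Fin 4, starRingEnd ℂ (trace (pauli a * (Wᴴ * pauli b * W))) =
      trace (pauli a * (Wᴴ * pauli b * W)) := fun a b => by
    rw [← Complex.star_def, ← Matrix.trace_conjTranspose]
    simp only [Matrix.conjTranspose_mul, Matrix.conjTranspose_conjTranspose, pauli_conjTranspose]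
    rw [Matrix.trace_mul_comm]
    simp only [Matrix.mul_assoc]
  simp only [ptmMatrix, ptm, conjMap, Matrix.of_apply, Matrix.conjTranspose_conjTranspose,
    map_div₀, map_ofNat]
  rw [hreal, hcycle, hcycle, div_mul_div_comm, ← Matrix.trace_kronecker, Matrix.mul_kronecker_mul,
    Matrix.mul_kronecker_mul, Matrix.mul_kronecker_mul, Matrix.conjTranspose_kronecker]
  norm_num

lemma IsTwoDesign.sum_conj_ptmMatrix_mul_ptmMatrix {ι : Type*} [Fintype ι] {w : ι → ℝ}
    {W : ι → QMat} (h2 : IsTwoDesign w W) (t x t' y : Fin 4) :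
    ∑ i, (w i : ℂ) *
        (starRingEnd ℂ (ptmMatrix (conjMap (W i)ᴴ) t x) * ptmMatrix (conjMap (W i)ᴴ) t' y) =
      (if t = 0 ∧ t' = 0 then 1 else 0) *
          ((4 * (if x = 0 ∧ y = 0 then 1 else 0) - if x = y then 1 else 0) / 3) +
        (if t = t' then 1 else 0) *
          (((if x = y then 1 else 0) - if x = 0 ∧ y = 0 then 1 else 0) / 3) := by
  have hsum : ∀ (X : Matrix (Fin 2 × Fin 2) (Fin 2 × Fin 2) ℂ) (Y : ι → _),
      ∑ i, (w i : ℂ) * (trace (X * Y i) / 4) = trace (X * ∑ i, (w i : ℂ) • Y i) / 4 := by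
    intro X Y
    simp only [Matrix.mul_sum, Matrix.mul_smul, Matrix.trace_sum, Matrix.trace_smul, smul_eq_mul,
      Finset.sum_div, mul_div_assoc]
  simp only [conj_ptmMatrix_mul_ptmMatrix_conjMap, hsum, h2 (pauli t ⊗ₖ pauli t'),
    Matrix.mul_add, Matrix.mul_smul, Matrix.mul_one, Matrix.trace_add, Matrix.trace_smul,
    Matrix.trace_kronecker, trace_pauli, trace_kronecker_mul_swapOp, trace_swapOp_mul_kronecker,
    trace_pauli_mul_pauli, smul_eq_mul]
  simp only [ite_and]
  split_ifs <;> norm_num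

lemma IsTwoDesign.sum_smul_conjTranspose_ptmMatrix_mul_mul {ι : Type*} [Fintype ι] {w : ι → ℝ}
    {W : ι → QMat} (h2 : IsTwoDesign w W) (K : Matrix (Fin 4) (Fin 4) ℂ) :
    ∑ i, (w i : ℂ) • ((ptmMatrix (conjMap (W i)ᴴ))ᴴ * K * ptmMatrix (conjMap (W i)ᴴ)) =
      Matrix.diagonal fun x => if x = 0 then K 0 0 else (trace K - K 0 0) / 3 := by
  ext x y
  have hentry : (∑ i, (w i : ℂ) • ((ptmMatrix (conjMap (W i)ᴴ))ᴴ * K *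
      ptmMatrix (conjMap (W i)ᴴ))) x y = ∑ t, ∑ t', K t t' * ∑ i, (w i : ℂ) *
        (starRingEnd ℂ (ptmMatrix (conjMap (W i)ᴴ) t x) * ptmMatrix (conjMap (W i)ᴴ) t' y) := by
    simp only [Matrix.sum_apply, Matrix.smul_apply, Matrix.mul_apply, Matrix.conjTranspose_apply,
      Complex.star_def, smul_eq_mul, Finset.mul_sum, Finset.sum_mul]
    refine (Finset.sum_comm.trans (Finset.sum_congr rfl fun _ _ => Finset.sum_comm)).trans
      (Finset.sum_comm.trans ?_)
    exact Finset.sum_congr rfl fun _ _ => Finset.sum_congr rfl fun _ _ =>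
      Finset.sum_congr rfl fun _ _ => by ring
  have hcorner : ∀ c : ℂ, ∑ t, ∑ t', K t t' * ((if t = 0 ∧ t' = 0 then 1 else 0) * c) =
      K 0 0 * c := fun c => by
    simp [ite_and, Finset.sum_ite_eq']
  have htrace : ∀ c : ℂ, ∑ t, ∑ t', K t t' * ((if t = t' then 1 else 0) * c) = trace K * c :=
    fun c => by simp [Matrix.trace, Finset.sum_mul]
  rw [hentry]
  simp only [h2.sum_conj_ptmMatrix_mul_ptmMatrix, mul_add, Finset.sum_add_distrib, hcorner,
    htrace, Matrix.diagonal_apply]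
  split_ifs <;> simp_all <;> ring

lemma IsTwoDesign.sum_smul_conjTranspose_mul_self_ptmMatrix_hsAdj_mul {ι : Type*} [Fintype ι]
    {w : ι → ℝ} {W : ι → QMat} (h2 : IsTwoDesign w W) {D t : Fin 3 → ℝ} {U V : QMat} (hU : IsUnitary U)
    (hV : IsUnitary V) {N : QMat → QMat} (hN : IsChannel N)
    (hNform : ∀ ρ, N ρ = U * normalForm D t (V * ρ * Vᴴ) * Uᴴ) :
    ∑ i, (w i : ℂ) • ((ptmMatrix (hsAdj N) * ptmMatrix (conjMap (W i)ᴴ))ᴴ *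
        (ptmMatrix (hsAdj N) * ptmMatrix (conjMap (W i)ᴴ))) =
      Matrix.diagonal fun x =>
        ((if x = 0 then 1 else ((∑ i, D i ^ 2) + ∑ i, t i ^ 2) / 3 : ℝ) : ℂ) := by
  have hgram : ∀ S : Matrix (Fin 4) (Fin 4) ℂ,
      (ptmMatrix (hsAdj N) * S)ᴴ * (ptmMatrix (hsAdj N) * S) =
        Sᴴ * (ptmMatrix N * (ptmMatrix N)ᴴ) * S := fun S => by
    rw [ptmMatrix_hsAdj hN.linear, Matrix.conjTranspose_mul, Matrix.conjTranspose_conjTranspose]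
    simp only [Matrix.mul_assoc]
  have hcorner : (ptmMatrix N * (ptmMatrix N)ᴴ) 0 0 = 1 := by
    simp [Matrix.mul_apply, Matrix.conjTranspose_apply,
      ptmMatrix_apply_zero_left hN.tracePreserving]
  have htrace : trace (ptmMatrix N * (ptmMatrix N)ᴴ) =
      1 + (((∑ i, D i ^ 2) + ∑ i, t i ^ 2 : ℝ) : ℂ) := by
    rw [Matrix.trace_mul_comm, trace_conjTranspose_mul_self_ptmMatrix_of_normalForm hU hV hNform]
  simp only [hgram, h2.sum_smul_conjTranspose_ptmMatrix_mul_mul, hcorner, htrace]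
  congr 1
  ext x
  split_ifs <;> push_cast <;> ring

lemma trace_pauliString_mul_conj_qprod {n : ℕ} (W : Fin n → QMat) (t u : Fin n → Fin 4) :
    trace (pauliString t * ((qprod W)ᴴ * pauliString u * qprod W)) / 2 ^ n =
      ∏ k, ptmMatrix (conjMap (W k)ᴴ) (t k) (u k) := by
  rw [pauliString_eq_qprod, pauliString_eq_qprod, conjTranspose_qprod, qprod_mul_qprod,
    qprod_mul_qprod, qprod_mul_qprod, trace_qprod, ← Fin.prod_const, ← Finset.prod_div_distrib]
  simp [ptmMatrix, ptm, conjMap, Matrix.mul_assoc]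

lemma tensorPow_conj_obsOf {n : ℕ} (Φ : QMat → QMat) (W : Fin n → QMat)
    (a : (Fin n → Fin 4) → ℝ) :
    tensorPow n Φ ((qprod W)ᴴ * obsOf a * qprod W) =
      ∑ s, (∑ u, (a u : ℂ) * ∏ k, (ptmMatrix Φ * ptmMatrix (conjMap (W k)ᴴ)) (s k) (u k)) •
        pauliString s := by
  have hcoeff : ∀ t, trace (pauliString t * ((qprod W)ᴴ * obsOf a * qprod W)) / 2 ^ n =
      ∑ u, (a u : ℂ) * ∏ k, ptmMatrix (conjMap (W k)ᴴ) (t k) (u k) := fun t => by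
    simp only [obsOf, Matrix.mul_sum, Matrix.sum_mul, Matrix.mul_smul, Matrix.smul_mul,
      Matrix.trace_sum, Matrix.trace_smul, smul_eq_mul, Finset.sum_div, mul_div_assoc,
      trace_pauliString_mul_conj_qprod]
  unfold tensorPow tensorMap
  refine Finset.sum_congr rfl fun s _ => ?_
  rw [← Finset.sum_smul]
  congr 1
  simp only [hcoeff, Finset.mul_sum]
  rw [Finset.sum_comm]
  refine Finset.sum_congr rfl fun u _ => ?_
  rw [← Matrix.sum_prod_mul_prod, Finset.mul_sum]
  exact Finset.sum_congr rfl fun t _ => by simp only [ptmMatrix, Matrix.of_apply]; ring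

section TensorMoments

variable {σ κ : Type*} [Fintype σ] [DecidableEq σ] [Fintype κ]

lemma sum_sq_norm_sum_mul_prod (T : σ → Matrix κ κ ℂ) (a : (σ → κ) → ℝ) :
    ((∑ s : σ → κ, ‖∑ u, (a u : ℂ) * ∏ k, T k (s k) (u k)‖ ^ 2 : ℝ) : ℂ) =
      ∑ u, ∑ u', (a u : ℂ) * a u' * ∏ k, ((T k)ᴴ * T k) (u k) (u' k) := by
  simp only [← Matrix.sum_prod_mul_prod, Matrix.conjTranspose_apply, Complex.star_def,
    Finset.mul_sum]
  push_cast
  simp only [← Complex.conj_mul', map_sum, map_mul, map_prod, Complex.conj_ofReal,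
    Finset.sum_mul, Finset.mul_sum]
  refine (Finset.sum_comm.trans (Finset.sum_congr rfl fun _ _ => Finset.sum_comm)).trans
    (Finset.sum_comm.trans ?_)
  exact Finset.sum_congr rfl fun _ _ => Finset.sum_congr rfl fun _ _ =>
    Finset.sum_congr rfl fun _ _ => by ring

lemma sum_prod_mul_sum_sq_norm_of_twirl_eq_diagonal [DecidableEq κ] {ι : Type*} [Fintype ι]
    (w : ι → ℝ) (T : ι → Matrix κ κ ℂ) (c : κ → ℝ)
    (hT : ∑ i, (w i : ℂ) • ((T i)ᴴ * T i) = Matrix.diagonal fun x => (c x : ℂ))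
    (a : (σ → κ) → ℝ) :
    ∑ f : σ → ι, (∏ k, w (f k)) * ∑ s : σ → κ, ‖∑ u, (a u : ℂ) * ∏ k, T (f k) (s k) (u k)‖ ^ 2 =
      ∑ u, a u ^ 2 * ∏ k, c (u k) := by
  apply Complex.ofReal_injective
  have havg : ∀ u u' : σ → κ, ∑ f : σ → ι, (∏ k, (w (f k) : ℂ)) *
      ∏ k, ((T (f k))ᴴ * T (f k)) (u k) (u' k) = if u = u' then ∏ k, (c (u k) : ℂ) else 0 := by
    intro u u'
    rw [← Matrix.prod_diagonal_apply (fun x => (c x : ℂ)), ← hT]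
    simp only [Matrix.sum_apply, Matrix.smul_apply, smul_eq_mul, Fintype.prod_sum,
      Finset.prod_mul_distrib]
  rw [Complex.ofReal_sum, Complex.ofReal_sum]
  simp only [Complex.ofReal_mul, Complex.ofReal_prod, sum_sq_norm_sum_mul_prod]
  simp only [Finset.mul_sum]
  rw [Finset.sum_comm]
  refine Finset.sum_congr rfl fun u _ => ?_
  rw [Finset.sum_comm]
  trans ∑ u' : σ → κ, (a u : ℂ) * a u' * ∑ f : σ → ι, (∏ k, (w (f k) : ℂ)) *
    ∏ k, ((T (f k))ᴴ * T (f k)) (u k) (u' k)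
  · simp only [Finset.mul_sum]
    exact Finset.sum_congr rfl fun u' _ => Finset.sum_congr rfl fun f _ => by ring
  simp only [havg, mul_ite, mul_zero, Finset.sum_ite_eq, Finset.mem_univ, if_true]
  push_cast
  ring

end TensorMoments

lemma prod_ite_eq_zero_eq_pow_card_psupp {n : ℕ} (s : Fin n → Fin 4) (x : ℝ) :
    ∏ k, (if s k = 0 then 1 else x) = x ^ (psupp s).card := by
  simp [Finset.prod_ite, psupp]

theorem stmt_3_general (n : ℕ) (D t : Fin 3 → ℝ) (U V : QMat)
    (hU : IsUnitary U) (hV : IsUnitary V)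
    (N : QMat → QMat) (hN : IsChannel N)
    (hNform : ∀ ρ, N ρ = U * normalForm D t (V * ρ * Vᴴ) * Uᴴ)
    {ι : Type*} [Fintype ι] (w : ι → ℝ) (W : ι → QMat)
    (h2 : IsTwoDesign w W)
    (A : Finset (Fin n))
    (a : (Fin n → Fin 4) → ℝ) (ha : ∀ s, psupp s ≠ A → a s = 0) :
    ∑ f : Fin n → ι, (∏ k, w (f k)) *
        frobSq (tensorPow n (hsAdj N)
          ((qprod fun k => W (f k))ᴴ * obsOf a * qprod fun k => W (f k))) =
      (((∑ i, D i ^ 2) + ∑ i, t i ^ 2) / 3) ^ A.card * frobSq (obsOf a) := by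
  set c := ((∑ i, D i ^ 2) + ∑ i, t i ^ 2) / 3
  have hweight (u : Fin n → Fin 4) : a u ^ 2 * ∏ k, (if u k = 0 then 1 else c) =
      c ^ A.card * a u ^ 2 := by
    by_cases hu : psupp u = A
    · rw [prod_ite_eq_zero_eq_pow_card_psupp, hu, mul_comm]
    · simp [ha u hu]
  calc _ = ∑ f : Fin n → ι, (∏ k, w (f k)) * ∑ s : Fin n → Fin 4, ‖∑ u, (a u : ℂ) *
          ∏ k, (ptmMatrix (hsAdj N) * ptmMatrix (conjMap (W (f k))ᴴ)) (s k) (u k)‖ ^ 2 := by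
        simp only [tensorPow_conj_obsOf, frobSq_sum_smul_pauliString]
    _ = ∑ u, a u ^ 2 * ∏ k, (if u k = 0 then 1 else c) :=
        sum_prod_mul_sum_sq_norm_of_twirl_eq_diagonal w _ _
          (h2.sum_smul_conjTranspose_mul_self_ptmMatrix_hsAdj_mul hU hV hN hNform) a
    _ = c ^ A.card * frobSq (obsOf a) := by
        simp only [hweight, obsOf, frobSq_sum_smul_pauliString, Complex.norm_real, Real.norm_eq_abs,
          sq_abs, Finset.mul_sum]

/-- (Mean squared contraction under a unitary 2-design.)
For a channel `N = U N'(V·Vᴴ) Uᴴ` and `D_s` a unitary 2-design,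
`E_{W ~ D_s^{⊗n}} ‖N^{†⊗n}(Wᴴ O_A W)‖_F² = ((‖D‖₂² + ‖t‖₂²)/3)^{|A|}·‖O_A‖_F²`. -/
theorem stmt_3 (n : ℕ) (D t : Fin 3 → ℝ) (U V : QMat)
    (hU : IsUnitary U) (hV : IsUnitary V)
    (N : QMat → QMat) (hN : IsChannel N)
    (hNform : ∀ ρ, N ρ = U * normalForm D t (V * ρ * Vᴴ) * Uᴴ)
    {ι : Type*} [Fintype ι] (w : ι → ℝ) (W : ι → QMat)
    (hw0 : ∀ i, 0 ≤ w i) (hw1 : ∑ i, w i = 1)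
    (hWu : ∀ i, IsUnitary (W i)) (h2 : IsTwoDesign w W)
    (A : Finset (Fin n)) (hA : A.Nonempty)
    (a : (Fin n → Fin 4) → ℝ) (ha : ∀ s, psupp s ≠ A → a s = 0) :
    ∑ f : Fin n → ι, (∏ k, w (f k)) *
        frobSq (tensorPow n (hsAdj N)
          ((qprod fun k => W (f k))ᴴ * obsOf a * qprod fun k => W (f k))) =
      (((∑ i, D i ^ 2) + ∑ i, t i ^ 2) / 3) ^ A.card * frobSq (obsOf a) :=
  stmt_3_general n D t U V hU hV N hN hNform w W h2 A a ha

end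
end

section
/- Let C = C_L ∘ ⋯ ∘ C_1 where the linear maps C_1,…,C_L on 2^n×2^n complex matrices are sampled independently from probability distributions D_1,…,D_L, and for Pauli paths γ = (P_0,…,P_L) ∈ P_n^{L+1} define the Fourier coefficient Φ_γ(C) := Π_{j=1}^L 2^{−n}Tr[P_j C_j(P_{j−1})]. (1) If D_1,…,D_L are locally unbiased and the distribution of the adjoint map C_L† (with C_L ∼ D_L) is also locally unbiased, then for any two paths γ = (P_0,…,P_L) and γ' = (P'_0,…,P'_L) such that supp(P_j) ≠ supp(P'_j) for some j: E[Φ_γ(C)·Φ_{γ'}(C)] = 0. (2) If D_1,…,D_L are Pauli-invariant and the distribution of C_L† is also Pauli-invariant, then for any two distinct paths γ ≠ γ': E[Φ_γ(C)·Φ_{γ'}(C)] = 0. -/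
open scoped Kronecker
open Matrix
open scoped ComplexOrder

noncomputable section

/-!
By independence of the layers, `E[Φ_γ Φ_γ']` is a product over the layers `j` of
`4⁻ⁿ Tr[(P_j ⊗ P'_j) E[C_j(P_{j-1}) ⊗ C_j(P'_{j-1})]]`, so it suffices that one second moment
`E[C(P) ⊗ C(P')]` vanish. For Pauli-invariant layers and `P ≠ P'` this is orthogonality of the
characters `R ↦ ±1` of the Pauli group acting by conjugation; for locally unbiased layers it holds
because on a qubit where exactly one of `P`, `P'` acts as the identity, the 1-design twirl of
`I ⊗ σ` is `I ⊗ Tr[σ] I / 2 = 0`. If the paths differ only in their last Pauli, the same argument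
is run on the adjoint of the last layer, using `Tr[Q C(P)] = conj Tr[P C†(Q)]` for Hermitian
`P`, `Q`.
-/

/-- `pauli a * pauli b * pauli a = pauliCommSign a b • pauli b`: two Paulis commute or
anticommute. -/
def pauliCommSign (a b : Fin 4) : ℂ := if a = 0 ∨ b = 0 ∨ a = b then 1 else -1

lemma pauli_mul_pauli_mul_pauli (a b : Fin 4) :
    pauli a * pauli b * pauli a = pauliCommSign a b • pauli b := by
  fin_cases a <;> fin_cases b <;>
    (ext x y; fin_cases x <;> fin_cases y <;>
      simp [pauli, pauliCommSign, Matrix.mul_apply, Fin.sum_univ_two, Matrix.one_apply])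

lemma sum_pauliCommSign_mul_pauliCommSign (b c : Fin 4) :
    ∑ a, pauliCommSign a b * pauliCommSign a c = if b = c then 4 else 0 := by
  fin_cases b <;> fin_cases c <;> simp [pauliCommSign, Fin.sum_univ_four] <;> norm_num

section qprod

variable {n : ℕ}

lemma qprod_mul (V W : Fin n → QMat) : qprod V * qprod W = qprod fun k => V k * W k := by
  ext i j
  simp only [qprod, mul_apply, of_apply, ← Finset.prod_mul_distrib]
  exact (Fintype.prod_sum fun k y => V k (i k) y * W k y (j k)).symm

lemma qprod_conjTranspose (V : Fin n → QMat) : (qprod V)ᴴ = qprod fun k => (V k)ᴴ := by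
  ext i j
  simp [qprod, conjTranspose_apply]

lemma qprod_smul (c : Fin n → ℂ) (V : Fin n → QMat) :
    qprod (fun k => c k • V k) = (∏ k, c k) • qprod V := by
  ext i j
  simp [qprod, Finset.prod_mul_distrib]

lemma pauliString_mul_pauliString_mul_pauliString (r s : Fin n → Fin 4) :
    pauliString r * pauliString s * pauliString r =
      (∏ k, pauliCommSign (r k) (s k)) • pauliString s := by
  simp only [pauliString_eq_qprod, qprod_mul, pauli_mul_pauli_mul_pauli, qprod_smul]

lemma sum_prod_pauliCommSign_mul_prod_pauliCommSign {s t : Fin n → Fin 4} (hst : s ≠ t) :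
    ∑ r : Fin n → Fin 4,
      (∏ k, pauliCommSign (r k) (s k)) * ∏ k, pauliCommSign (r k) (t k) = 0 := by
  obtain ⟨k, hk⟩ := Function.ne_iff.1 hst
  simp_rw [← Finset.prod_mul_distrib]
  rw [← Fintype.prod_sum fun k a => pauliCommSign a (s k) * pauliCommSign a (t k)]
  exact Finset.prod_eq_zero (Finset.mem_univ k)
    (by rw [sum_pauliCommSign_mul_pauliCommSign, if_neg hk])

lemma qprod_mul_pauliString_mul_conjTranspose (V : Fin n → QMat) (s : Fin n → Fin 4) :
    qprod V * pauliString s * (qprod V)ᴴ = qprod fun k => V k * pauli (s k) * (V k)ᴴ := by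
  rw [pauliString_eq_qprod, qprod_conjTranspose, qprod_mul, qprod_mul]

lemma sum_prod_smul_qprod_kronecker_qprod_eq_zero {κ : Type*} [Fintype κ]
    {c : Fin n → κ → ℂ} {X Y : Fin n → κ → QMat} (k₀ : Fin n)
    (h : ∑ a, c k₀ a • (X k₀ a ⊗ₖ Y k₀ a) = 0) :
    ∑ f : Fin n → κ, (∏ k, c k (f k)) •
      (qprod (fun k => X k (f k)) ⊗ₖ qprod (fun k => Y k (f k))) = 0 := by
  ext x y
  simp only [Matrix.sum_apply, Matrix.smul_apply, kroneckerMap_apply, qprod, of_apply,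
    smul_eq_mul, ← Finset.prod_mul_distrib, Matrix.zero_apply]
  rw [← Fintype.prod_sum fun k a => c k a * (X k a (x.1 k) (y.1 k) * Y k a (x.2 k) (y.2 k))]
  refine Finset.prod_eq_zero (Finset.mem_univ k₀) ?_
  simpa [Matrix.sum_apply] using congrFun (congrFun h (x.1 k₀, x.2 k₀)) (y.1 k₀, y.2 k₀)

end qprod

section LinearMaps

variable {m : Type*} [Fintype m] [DecidableEq m]

/-- `φ ⊗ ψ` is well defined on `Matrix (m × m) (m × m) ℂ ≅ Matrix m m ℂ ⊗ Matrix m m ℂ`, so a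
vanishing combination of Kronecker products stays zero after applying `φ` and `ψ` factorwise. -/
lemma sum_smul_kronecker_map_eq_zero {κ : Type*} [Fintype κ]
    {φ ψ : Matrix m m ℂ → Matrix m m ℂ} (hφ : IsLinearMap ℂ φ) (hψ : IsLinearMap ℂ ψ)
    (c : κ → ℂ) (X Y : κ → Matrix m m ℂ) (h : ∑ f, c f • (X f ⊗ₖ Y f) = 0) :
    ∑ f, c f • (φ (X f) ⊗ₖ ψ (Y f)) = 0 := by
  let e := kroneckerLinearEquiv m m m m ℂ
  let Ψ := e.toLinearMap ∘ₗ
    TensorProduct.map (IsLinearMap.mk' φ hφ) (IsLinearMap.mk' ψ hψ) ∘ₗ e.symm.toLinearMap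
  have hΨ (X Y : Matrix m m ℂ) : Ψ (X ⊗ₖ Y) = φ X ⊗ₖ ψ Y := by simp [Ψ, e]
  simp_rw [← hΨ, ← map_smul, ← map_sum, h, map_zero]

lemma isLinearMap_hsAdj (Φ : Matrix m m ℂ → Matrix m m ℂ) : IsLinearMap ℂ (hsAdj Φ) where
  map_add A B := by
    ext i j
    simp [hsAdj, conjTranspose_add, Matrix.add_mul]
  map_smul c A := by
    ext i j
    simp [hsAdj, conjTranspose_smul, mul_comm]

lemma trace_mul_hsAdj {Φ : Matrix m m ℂ → Matrix m m ℂ} (hΦ : IsLinearMap ℂ Φ)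
    (P Q : Matrix m m ℂ) : trace (P * hsAdj Φ Q) = star (trace (Qᴴ * Φ Pᴴ)) := by
  have hΦsum : Φ Pᴴ = ∑ i, ∑ j, star (P j i) • Φ (single i j 1) := by
    rw [show Φ Pᴴ = IsLinearMap.mk' Φ hΦ Pᴴ from rfl]
    conv_lhs => rw [matrix_eq_sum_single Pᴴ]
    have hsingle (i j : m) : single i j (star (P j i)) = star (P j i) • single i j 1 := by
      rw [smul_single, smul_eq_mul, mul_one]
    simp only [conjTranspose_apply, hsingle, map_sum, map_smul]
    rfl
  rw [hΦsum, Finset.sum_comm]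
  simp only [Matrix.mul_sum, Matrix.mul_smul, trace_sum, trace_smul, star_sum, smul_eq_mul,
    star_mul', star_star]
  simp [trace, mul_apply, hsAdj]

lemma trace_mul_eq_star_trace_mul_hsAdj {Φ : Matrix m m ℂ → Matrix m m ℂ}
    (hΦ : IsLinearMap ℂ Φ) {P Q : Matrix m m ℂ} (hP : P.IsHermitian) (hQ : Q.IsHermitian) :
    trace (Q * Φ P) = star (trace (P * hsAdj Φ Q)) := by
  rw [trace_mul_hsAdj hΦ, hP.eq, hQ.eq, star_star]

end LinearMaps

section Moments

variable {n : ℕ} {ι : Type*} [Fintype ι] {w : ι → ℝ} {C : ι → NMat n → NMat n}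

/-- Conjugating by the Pauli strings `R` multiplies `P_s ⊗ P_t` by a character of `R`, and
averaging over all `R` kills it unless `s = t`. -/
lemma PauliInvariant.sum_smul_kronecker_pauliString_eq_zero (hC : PauliInvariant n w C)
    (hlin : ∀ i, IsLinearMap ℂ (C i)) {s t : Fin n → Fin 4} (hst : s ≠ t) :
    ∑ i, (w i : ℂ) • (C i (pauliString s) ⊗ₖ C i (pauliString t)) = 0 := by
  have hconj (r : Fin n → Fin 4) (i : ι) :
      C i (pauliString r * pauliString s * pauliString r) ⊗ₖ
          C i (pauliString r * pauliString t * pauliString r) =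
        ((∏ k, pauliCommSign (r k) (s k)) * ∏ k, pauliCommSign (r k) (t k)) •
          (C i (pauliString s) ⊗ₖ C i (pauliString t)) := by
    rw [pauliString_mul_pauliString_mul_pauliString, pauliString_mul_pauliString_mul_pauliString,
      (hlin i).map_smul, (hlin i).map_smul, smul_kronecker, kronecker_smul, smul_smul]
  rw [hC]
  simp_rw [hconj, smul_comm (w _ : ℂ), ← Finset.smul_sum]
  rw [← Finset.sum_smul, sum_prod_pauliCommSign_mul_prod_pauliCommSign hst, zero_smul, smul_zero]

lemma IsOneDesign.sum_smul_conj_pauli_kronecker_conj_pauli_eq_zero {κ : Type*} [Fintype κ]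
    {v : κ → ℝ} {W : κ → QMat} (hW : IsOneDesign v W) (hU : ∀ c, IsUnitary (W c))
    {a b : Fin 4} (hab : ¬(a = 0 ↔ b = 0)) :
    ∑ c, (v c : ℂ) • ((W c * pauli a * (W c)ᴴ) ⊗ₖ (W c * pauli b * (W c)ᴴ)) = 0 := by
  have hone (c : κ) : W c * pauli 0 * (W c)ᴴ = 1 := by
    rw [show pauli 0 = 1 from rfl, mul_one, (hU c).1]
  have htwirl {u : Fin 4} (hu : u ≠ 0) : ∑ c, (v c : ℂ) • (W c * pauli u * (W c)ᴴ) = 0 := by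
    rw [hW, trace_pauli, if_neg hu, zero_div, zero_smul]
  by_cases ha : a = 0
  · have hb : b ≠ 0 := fun hb => hab (iff_of_true ha hb)
    simp_rw [ha, hone, ← kronecker_smul]
    calc _ = kroneckerBilinear (R := ℂ) (1 : QMat)
            (∑ c, (v c : ℂ) • (W c * pauli b * (W c)ᴴ)) :=
          (map_sum (kroneckerBilinear (R := ℂ) (1 : QMat)) _ _).symm
      _ = 0 := by rw [htwirl hb, map_zero]
  · have hb : b = 0 := not_not.1 fun hb => hab (iff_of_false ha hb)
    simp_rw [hb, hone, ← smul_kronecker]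
    calc _ = (kroneckerBilinear (R := ℂ)).flip (1 : QMat)
            (∑ c, (v c : ℂ) • (W c * pauli a * (W c)ᴴ)) :=
          (map_sum ((kroneckerBilinear (R := ℂ)).flip (1 : QMat)) _ _).symm
      _ = 0 := by rw [htwirl ha, map_zero]

/-- On a qubit where exactly one of `P_s`, `P_t` is the identity, the local 1-design twirl of
`P_s ⊗ P_t` vanishes, hence so does the twirl by the product of the local designs. -/
lemma LocallyUnbiased.sum_smul_kronecker_pauliString_eq_zero (hC : LocallyUnbiased n w C)
    (hlin : ∀ i, IsLinearMap ℂ (C i)) {s t : Fin n → Fin 4} (hst : psupp s ≠ psupp t) :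
    ∑ i, (w i : ℂ) • (C i (pauliString s) ⊗ₖ C i (pauliString t)) = 0 := by
  obtain ⟨m, v, W, -, -, hU, hW, hmoment⟩ := hC
  obtain ⟨k₀, hk₀⟩ : ∃ k, ¬(s k = 0 ↔ t k = 0) := by
    by_contra! h
    exact hst (Finset.filter_congr fun k _ => (h k).not)
  have htwirl : ∑ f : Fin n → Fin m, ((∏ k, v k (f k) : ℝ) : ℂ) •
      ((qprod (fun k => W k (f k)) * pauliString s * (qprod fun k => W k (f k))ᴴ) ⊗ₖ
        (qprod (fun k => W k (f k)) * pauliString t * (qprod fun k => W k (f k))ᴴ)) = 0 := by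
    simp_rw [qprod_mul_pauliString_mul_conjTranspose, Complex.ofReal_prod]
    exact sum_prod_smul_qprod_kronecker_qprod_eq_zero (c := fun k a => (v k a : ℂ))
      (X := fun k a => W k a * pauli (s k) * (W k a)ᴴ)
      (Y := fun k a => W k a * pauli (t k) * (W k a)ᴴ) k₀
      ((hW k₀).sum_smul_conj_pauli_kronecker_conj_pauli_eq_zero (hU k₀) hk₀)
  rw [hmoment]
  refine Finset.sum_eq_zero fun i _ => ?_
  simp_rw [Complex.ofReal_mul, mul_smul, ← Finset.smul_sum]
  rw [sum_smul_kronecker_map_eq_zero (hlin i) (hlin i) _ _ _ htwirl, smul_zero]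

end Moments

section TraceCorrelations

variable {m ι : Type*} [Fintype m] [Fintype ι]

lemma sum_mul_trace_mul_trace (c : ι → ℂ) (X Y : ι → Matrix m m ℂ) (Q Q' : Matrix m m ℂ) :
    ∑ i, c i * (trace (Q * X i) * trace (Q' * Y i)) =
      trace ((Q ⊗ₖ Q') * ∑ i, c i • (X i ⊗ₖ Y i)) := by
  simp only [Matrix.mul_sum, trace_sum, Matrix.mul_smul, ← mul_kronecker_mul, trace_smul,
    trace_kronecker, smul_eq_mul]

lemma sum_mul_trace_mul_trace_eq_zero {c : ι → ℂ} {X Y : ι → Matrix m m ℂ}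
    (h : ∑ i, c i • (X i ⊗ₖ Y i) = 0) (Q Q' : Matrix m m ℂ) :
    ∑ i, c i * (trace (Q * X i) * trace (Q' * Y i)) = 0 := by
  rw [sum_mul_trace_mul_trace, h, Matrix.mul_zero, trace_zero]

lemma sum_mul_trace_mul_trace_eq_zero_of_hsAdj [DecidableEq m] {w : ι → ℝ}
    {C : ι → Matrix m m ℂ → Matrix m m ℂ} (hlin : ∀ i, IsLinearMap ℂ (C i))
    {P P' Q Q' : Matrix m m ℂ} (hP : P.IsHermitian) (hP' : P'.IsHermitian)
    (hQ : Q.IsHermitian) (hQ' : Q'.IsHermitian)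
    (h : ∑ i, (w i : ℂ) • (hsAdj (C i) Q ⊗ₖ hsAdj (C i) Q') = 0) :
    ∑ i, (w i : ℂ) * (trace (Q * C i P) * trace (Q' * C i P')) = 0 := by
  have hterm (i : ι) : (w i : ℂ) * (trace (Q * C i P) * trace (Q' * C i P')) =
      star ((w i : ℂ) * (trace (P * hsAdj (C i) Q) * trace (P' * hsAdj (C i) Q'))) := by
    rw [trace_mul_eq_star_trace_mul_hsAdj (hlin i) hP hQ,
      trace_mul_eq_star_trace_mul_hsAdj (hlin i) hP' hQ', star_mul', star_mul',
      Complex.star_def, Complex.conj_ofReal]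
  simp_rw [hterm, ← star_sum, sum_mul_trace_mul_trace_eq_zero h, star_zero]

end TraceCorrelations

section PauliPaths

variable {n L : ℕ} {ι : Type*} [Fintype ι]

lemma sum_prod_mul_pathCoeff_mul_pathCoeff (w : Fin L → ι → ℝ)
    (C : Fin L → ι → NMat n → NMat n) (γ γ' : Fin (L + 1) → Fin n → Fin 4) :
    ∑ f : Fin L → ι, ((∏ j, w j (f j) : ℝ) : ℂ) *
        (pathCoeff (fun j => C j (f j)) γ * pathCoeff (fun j => C j (f j)) γ') =
      ∏ j : Fin L, (∑ i, (w j i : ℂ) *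
        (trace (pauliString (γ j.succ) * C j i (pauliString (γ j.castSucc))) *
          trace (pauliString (γ' j.succ) * C j i (pauliString (γ' j.castSucc))))) /
        ((2 : ℂ) ^ n * (2 : ℂ) ^ n) := by
  simp_rw [Finset.sum_div]
  rw [Fintype.prod_sum]
  refine Finset.sum_congr rfl fun f _ => ?_
  simp only [pathCoeff, Complex.ofReal_prod, ← Finset.prod_mul_distrib]
  exact Finset.prod_congr rfl fun j _ => by ring

theorem sum_prod_mul_pathCoeff_mul_pathCoeff_eq_zero (w : Fin L → ι → ℝ)
    (C : Fin L → ι → NMat n → NMat n) (hlin : ∀ j i, IsLinearMap ℂ (C j i))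
    (R : (Fin n → Fin 4) → (Fin n → Fin 4) → Prop)
    (hmoment : ∀ j s t, R s t →
      ∑ i, (w j i : ℂ) • (C j i (pauliString s) ⊗ₖ C j i (pauliString t)) = 0)
    (last : Fin L) (hlast : last.succ = Fin.last L)
    (hmomentAdj : ∀ s t, R s t → ∑ i, (w last i : ℂ) •
      (hsAdj (C last i) (pauliString s) ⊗ₖ hsAdj (C last i) (pauliString t)) = 0)
    (γ γ' : Fin (L + 1) → Fin n → Fin 4) (hγ : ∃ j, R (γ j) (γ' j)) :
    ∑ f : Fin L → ι, ((∏ j, w j (f j) : ℝ) : ℂ) *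
        (pathCoeff (fun j => C j (f j)) γ * pathCoeff (fun j => C j (f j)) γ') = 0 := by
  rw [sum_prod_mul_pathCoeff_mul_pathCoeff]
  obtain ⟨j, hj⟩ := hγ
  induction j using Fin.lastCases with
  | last =>
    refine Finset.prod_eq_zero (Finset.mem_univ last) ?_
    rw [sum_mul_trace_mul_trace_eq_zero_of_hsAdj (hlin last) (pauliString_conjTranspose _)
      (pauliString_conjTranspose _) (pauliString_conjTranspose _) (pauliString_conjTranspose _)
      (hmomentAdj _ _ (by rwa [hlast])), zero_div]
  | cast j =>
    refine Finset.prod_eq_zero (Finset.mem_univ j) ?_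
    rw [sum_mul_trace_mul_trace_eq_zero (hmoment j _ _ hj), zero_div]

end PauliPaths

theorem stmt_10_general (n L : ℕ) (hL : 0 < L) {ι : Type*} [Fintype ι]
    (w : Fin L → ι → ℝ) (C : Fin L → ι → NMat n → NMat n)
    (hlin : ∀ j i, IsLinearMap ℂ (C j i)) :
    ((∀ j, LocallyUnbiased n (w j) (C j)) →
      LocallyUnbiased n (w ⟨L - 1, Nat.sub_lt hL Nat.one_pos⟩)
        (fun i => hsAdj (C ⟨L - 1, Nat.sub_lt hL Nat.one_pos⟩ i)) →
      ∀ γ γ' : Fin (L + 1) → Fin n → Fin 4,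
        (∃ j, psupp (γ j) ≠ psupp (γ' j)) →
        ∑ f : Fin L → ι, ((∏ j, w j (f j) : ℝ) : ℂ) *
            (pathCoeff (fun j => C j (f j)) γ * pathCoeff (fun j => C j (f j)) γ') = 0) ∧
    ((∀ j, PauliInvariant n (w j) (C j)) →
      PauliInvariant n (w ⟨L - 1, Nat.sub_lt hL Nat.one_pos⟩)
        (fun i => hsAdj (C ⟨L - 1, Nat.sub_lt hL Nat.one_pos⟩ i)) →
      ∀ γ γ' : Fin (L + 1) → Fin n → Fin 4, γ ≠ γ' →
        ∑ f : Fin L → ι, ((∏ j, w j (f j) : ℝ) : ℂ) *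
            (pathCoeff (fun j => C j (f j)) γ * pathCoeff (fun j => C j (f j)) γ') = 0) := by
  have hlast : (⟨L - 1, Nat.sub_lt hL Nat.one_pos⟩ : Fin L).succ = Fin.last L :=
    Fin.ext (by simp; omega)
  constructor
  · intro hC hCadj γ γ' hγ
    exact sum_prod_mul_pathCoeff_mul_pathCoeff_eq_zero w C hlin (fun s t => psupp s ≠ psupp t)
      (fun j _ _ => (hC j).sum_smul_kronecker_pauliString_eq_zero (hlin j)) _ hlast
      (fun _ _ => hCadj.sum_smul_kronecker_pauliString_eq_zero fun _ => isLinearMap_hsAdj _)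
      γ γ' hγ
  · intro hC hCadj γ γ' hγ
    exact sum_prod_mul_pathCoeff_mul_pathCoeff_eq_zero w C hlin (· ≠ ·)
      (fun j _ _ => (hC j).sum_smul_kronecker_pauliString_eq_zero (hlin j)) _ hlast
      (fun _ _ => hCadj.sum_smul_kronecker_pauliString_eq_zero fun _ => isLinearMap_hsAdj _)
      γ γ' (Function.ne_iff.1 hγ)

/-- (Orthogonality of Pauli paths.) For an `L`-layered random circuit
with independently sampled layers: (1) if all layer distributions and the distribution of
the adjoint of the last layer are locally unbiased, then Fourier coefficients of paths
with different supports are uncorrelated; (2) if they are Pauli-invariant, then Fourier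
coefficients of distinct paths are uncorrelated. -/
theorem stmt_10 (n L : ℕ) (hL : 0 < L) {ι : Type*} [Fintype ι]
    (w : Fin L → ι → ℝ) (C : Fin L → ι → NMat n → NMat n)
    (hw0 : ∀ j i, 0 ≤ w j i) (hw1 : ∀ j, ∑ i, w j i = 1)
    (hlin : ∀ j i, IsLinearMap ℂ (C j i)) :
    ((∀ j, LocallyUnbiased n (w j) (C j)) →
      LocallyUnbiased n (w ⟨L - 1, Nat.sub_lt hL Nat.one_pos⟩)
        (fun i => hsAdj (C ⟨L - 1, Nat.sub_lt hL Nat.one_pos⟩ i)) →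
      ∀ γ γ' : Fin (L + 1) → Fin n → Fin 4,
        (∃ j, psupp (γ j) ≠ psupp (γ' j)) →
        ∑ f : Fin L → ι, ((∏ j, w j (f j) : ℝ) : ℂ) *
            (pathCoeff (fun j => C j (f j)) γ * pathCoeff (fun j => C j (f j)) γ') = 0) ∧
    ((∀ j, PauliInvariant n (w j) (C j)) →
      PauliInvariant n (w ⟨L - 1, Nat.sub_lt hL Nat.one_pos⟩)
        (fun i => hsAdj (C ⟨L - 1, Nat.sub_lt hL Nat.one_pos⟩ i)) →
      ∀ γ γ' : Fin (L + 1) → Fin n → Fin 4, γ ≠ γ' →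
        ∑ f : Fin L → ι, ((∏ j, w j (f j) : ℝ) : ℂ) *
            (pathCoeff (fun j => C j (f j)) γ * pathCoeff (fun j => C j (f j)) γ') = 0) :=
  stmt_10_general n L hL w C hlin
end
end
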